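/- arXiv:1204.0813 — 5 statements merged into one kernel-verified Lean document; each statement's English description precedes it below -/
import Mathlib

section
/- Let k ≥ 1 and let F : ℝ^k → ℝ be interchangeable (i.e., F(μ_{σ(1)},…,μ_{σ(k)}) = F(μ_1,…,μ_k) for every permutation σ of {1,…,k}) and twice continuously differentiable on a neighborhood of the diagonal point a·𝟙 = (a,…,a) for some a ∈ ℝ. Then there exist constants C > 0 and δ > 0 such that for every μ = (μ_1,…,μ_k) ∈ ℝ^k with ‖μ − a·𝟙‖ < δ, one has |F(μ) − F(μ̄·𝟙)| ≤ C‖μ − μ̄·𝟙‖², where μ̄ = (1/k)∑_{j=1}^k μ_j is the arithmetic mean of the coordinates of μ. -/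
/-!
At a constant vector the derivative of a symmetric function is invariant under permutations of
the coordinates, hence a multiple of `v ↦ ∑ i, v i`, so it vanishes on `μ - μ̄𝟙`. Thus
`F μ - F (μ̄𝟙)` is the first-order Taylor remainder of `F` at `μ̄𝟙`, which is `O(‖μ - μ̄𝟙‖²)`
uniformly near `a𝟙` because `F` is `C²` there; and `μ̄𝟙` is near `a𝟙` whenever `μ` is.
-/

open Metric

theorem ContDiffAt.exists_norm_sub_sub_fderiv_le {E G : Type*} [NormedAddCommGroup E]
    [NormedSpace ℝ E] [NormedAddCommGroup G] [NormedSpace ℝ G] {f : E → G} {x₀ : E}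
    (hf : ContDiffAt ℝ 2 f x₀) :
    ∃ C > (0 : ℝ), ∃ δ > (0 : ℝ), ∀ x ∈ ball x₀ δ, ∀ y ∈ ball x₀ δ,
      ‖f y - f x - fderiv ℝ f x (y - x)‖ ≤ C * ‖y - x‖ ^ 2 := by
  obtain ⟨K, t, ht, hlip⟩ := (hf.fderiv_right (m := 1) le_rfl).exists_lipschitzOnWith
  have hdiff : ∀ᶠ y in nhds x₀, DifferentiableAt ℝ f y :=
    (hf.eventually (by simp)).mono fun y hy => hy.differentiableAt two_ne_zero
  obtain ⟨δ, hδ, hball⟩ := Metric.mem_nhds_iff.mp (Filter.inter_mem ht hdiff)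
  refine ⟨K + 1, by positivity, δ, hδ, fun x hx y hy => ?_⟩
  have hseg : segment ℝ x y ⊆ ball x₀ δ := (convex_ball x₀ δ).segment_subset hx hy
  have hbound : ∀ z ∈ segment ℝ x y, ‖fderiv ℝ f z - fderiv ℝ f x‖ ≤ K * ‖y - x‖ := by
    intro z hz
    calc ‖fderiv ℝ f z - fderiv ℝ f x‖ ≤ K * ‖z - x‖ := by
          simpa only [dist_eq_norm] using
            hlip.dist_le_mul z (hball (hseg hz)).1 x (hball hx).1
      _ ≤ K * ‖y - x‖ := by gcongr; exact norm_sub_le_of_mem_segment hz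
  calc ‖f y - f x - fderiv ℝ f x (y - x)‖ ≤ K * ‖y - x‖ * ‖y - x‖ :=
        (convex_segment x y).norm_image_sub_le_of_norm_fderiv_le'
          (fun z hz => (hball (hseg hz)).2) hbound (left_mem_segment ℝ x y)
          (right_mem_segment ℝ x y)
    _ ≤ (K + 1) * ‖y - x‖ ^ 2 := by nlinarith [norm_nonneg (y - x)]

section Fintype

variable {ι : Type*} [Fintype ι]

theorem norm_const_mean_sub_const_le [Nonempty ι] (μ : ι → ℝ) (a : ℝ) :
    ‖(fun _ => (∑ j, μ j) / Fintype.card ι) - fun _ : ι => a‖ ≤ ‖μ - fun _ => a‖ := by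
  have hcard : (0 : ℝ) < Fintype.card ι := by exact_mod_cast Fintype.card_pos
  have hmean : (∑ j, μ j) / Fintype.card ι - a = (∑ j, (μ j - a)) / Fintype.card ι := by
    rw [Finset.sum_sub_distrib, Finset.sum_const, Finset.card_univ, nsmul_eq_mul]
    field_simp
  change ‖fun _ : ι => (∑ j, μ j) / Fintype.card ι - a‖ ≤ _
  rw [pi_norm_const, hmean, norm_div, Real.norm_natCast, div_le_iff₀ hcard]
  calc ‖∑ j, (μ j - a)‖ ≤ ∑ j, ‖μ j - a‖ := norm_sum_le _ _
    _ ≤ ∑ _j : ι, ‖μ - fun _ => a‖ :=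
        Finset.sum_le_sum fun j _ => norm_le_pi_norm (μ - fun _ => a) j
    _ = ‖μ - fun _ => a‖ * Fintype.card ι := by simp [mul_comm]

theorem sum_sub_mean_eq_zero [Nonempty ι] (μ : ι → ℝ) :
    ∑ i, (μ i - (∑ j, μ j) / Fintype.card ι) = 0 := by
  rw [Finset.sum_sub_distrib, Finset.sum_const, Finset.card_univ, nsmul_eq_mul,
    mul_div_cancel₀ _ (by exact_mod_cast Fintype.card_ne_zero), sub_self]

theorem map_eq_zero_of_comp_perm_eq {A M Φ : Type*} [AddCommMonoid A] [AddCommMonoid M]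
    [FunLike Φ (ι → A) M] [AddMonoidHomClass Φ (ι → A) M] (L : Φ)
    (hL : ∀ (σ : Equiv.Perm ι) (w : ι → A), L (w ∘ σ) = L w) {v : ι → A}
    (hv : ∑ i, v i = 0) : L v = 0 := by
  classical
  rcases isEmpty_or_nonempty ι with hι | ⟨⟨i₀⟩⟩
  · rw [Subsingleton.elim v 0, map_zero]
  have hmove : ∀ i, L (Pi.single i (v i)) = L (Pi.single i₀ (v i)) := fun i => by
    rw [← hL (Equiv.swap i₀ i), Pi.single_comp_equiv, Equiv.symm_swap, Equiv.swap_apply_right]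
  calc L v = ∑ i, L (Pi.single i (v i)) := by rw [← map_sum, Finset.univ_sum_single]
    _ = ∑ i, L (Pi.single i₀ (v i)) := Finset.sum_congr rfl fun i _ => hmove i
    _ = L (Pi.single i₀ (∑ i, v i)) := by
        rw [← map_sum L]
        exact congrArg L (map_sum (AddMonoidHom.single (fun _ => A) i₀) v _).symm
    _ = 0 := by rw [hv, Pi.single_zero, map_zero]

theorem fderiv_const_comp_perm {E : Type*} [NormedAddCommGroup E] [NormedSpace ℝ E]
    {F : (ι → ℝ) → E} (hF : ∀ (σ : Equiv.Perm ι) (μ : ι → ℝ), F (μ ∘ σ) = F μ)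
    (σ : Equiv.Perm ι) (c : ℝ) (w : ι → ℝ) :
    fderiv ℝ F (fun _ => c) (w ∘ σ) = fderiv ℝ F (fun _ => c) w := by
  let T : (ι → ℝ) ≃L[ℝ] (ι → ℝ) := (LinearEquiv.funCongrLeft ℝ ℝ σ).toContinuousLinearEquiv
  have hFT : F ∘ T = F := funext fun μ => hF σ μ
  have h := T.comp_right_fderiv (f := F) (x := fun _ => c)
  rw [hFT] at h
  exact (DFunLike.congr_fun h w).symm

theorem fderiv_const_apply_eq_zero_of_sum_eq_zero {E : Type*} [NormedAddCommGroup E]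
    [NormedSpace ℝ E] {F : (ι → ℝ) → E}
    (hF : ∀ (σ : Equiv.Perm ι) (μ : ι → ℝ), F (μ ∘ σ) = F μ) (c : ℝ) {v : ι → ℝ}
    (hv : ∑ i, v i = 0) : fderiv ℝ F (fun _ => c) v = 0 :=
  map_eq_zero_of_comp_perm_eq _ (fderiv_const_comp_perm hF · c) hv

end Fintype

/-- **The Averaging Principle** (Theorem 1 of the paper).
If `F : ℝ^k → ℝ` is interchangeable (symmetric) and twice continuously differentiable
near the diagonal point `(a,…,a)`, then `F μ = F (μ̄,…,μ̄) + O(‖μ - μ̄𝟙‖²)` for `μ` near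
the diagonal, where `μ̄` is the arithmetic mean of the coordinates of `μ`. -/
theorem averaging_principle (k : ℕ) (hk : 1 ≤ k) (F : (Fin k → ℝ) → ℝ)
    (hsym : ∀ (σ : Equiv.Perm (Fin k)) (μ : Fin k → ℝ), F (μ ∘ σ) = F μ)
    (a : ℝ) (hF : ContDiffAt ℝ 2 F (fun _ => a)) :
    ∃ C > (0:ℝ), ∃ δ > (0:ℝ), ∀ μ : Fin k → ℝ,
      ‖μ - (fun _ => a)‖ < δ →
      |F μ - F (fun _ => (∑ j, μ j) / k)| ≤
        C * ‖μ - (fun _ => (∑ j, μ j) / k)‖ ^ 2 := by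
  have : Nonempty (Fin k) := Fin.pos_iff_nonempty.mp hk
  obtain ⟨C, hC, δ, hδ, hremainder⟩ := hF.exists_norm_sub_sub_fderiv_le
  refine ⟨C, hC, δ, hδ, fun μ hμ => ?_⟩
  set p : Fin k → ℝ := fun _ => (∑ j, μ j) / k
  have hμ_mem : μ ∈ ball (fun _ => a) δ := by rwa [mem_ball, dist_eq_norm]
  have hp_mem : p ∈ ball (fun _ => a) δ := by
    rw [mem_ball, dist_eq_norm]
    simpa only [Fintype.card_fin] using (norm_const_mean_sub_const_le μ a).trans_lt hμ
  have hlinear : fderiv ℝ F p (μ - p) = 0 := by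
    refine fderiv_const_apply_eq_zero_of_sum_eq_zero hsym _ ?_
    simpa only [Pi.sub_apply, p, Fintype.card_fin] using sum_sub_mean_eq_zero μ
  simpa only [hlinear, sub_zero, Real.norm_eq_abs] using hremainder p hp_mem μ hμ_mem
end

section
/- Let k ≥ 1 and let F : ℝ^k → ℝ be weakly interchangeable (i.e., for all a, b ∈ ℝ and all indices i, j ∈ {1,…,k}, the value of F on the vector that equals a in every coordinate except for the value b in coordinate i equals its value on the vector that equals a everywhere except for the value b in coordinate j) and twice continuously differentiable on a neighborhood of the diagonal point a·𝟙 for some a ∈ ℝ. Then there exist constants C > 0 and δ > 0 such that for every μ ∈ ℝ^k with ‖μ − a·𝟙‖ < δ, |F(μ) − F(μ̄·𝟙)| ≤ C‖μ − μ̄·𝟙‖², where μ̄ = (1/k)∑_{j=1}^k μ_j. -/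
/-!
Write `v` for the diagonal vector `μ̄·𝟙`. Since `F` is `C²` near `a·𝟙`, its derivative is
Lipschitz on a ball around `a·𝟙`, so `F μ = F v + DF(v)(μ - v) + O(‖μ - v‖²)` whenever `μ` and `v`
lie in that ball; and `v` is at least as close to `a·𝟙` as `μ` is. Weak interchangeability makes
`b ↦ F (update v i b)` independent of `i`, so all partial derivatives of `F` at the diagonal point
`v` coincide: `DF(v)` is a multiple of `x ↦ ∑ xᵢ`. It therefore kills `μ - v`, whose coordinates
sum to zero, and the linear term drops out.
-/

open Metric

section Average

variable {ι : Type*} [Fintype ι]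

theorem sum_sub_average_eq_zero (μ : ι → ℝ) :
    ∑ i, (μ i - (∑ j, μ j) / Fintype.card ι) = 0 := by
  rcases isEmpty_or_nonempty ι with _ | _
  · simp
  · have : (Fintype.card ι : ℝ) ≠ 0 := by positivity
    rw [Finset.sum_sub_distrib, Finset.sum_const, Finset.card_univ, nsmul_eq_mul,
      mul_div_cancel₀ _ this, sub_self]

theorem norm_const_average_sub_const_le (μ : ι → ℝ) (a : ℝ) :
    ‖(fun _ => (∑ j, μ j) / Fintype.card ι) - fun _ : ι => a‖ ≤ ‖μ - fun _ => a‖ := by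
  refine (pi_norm_le_iff_of_nonneg (norm_nonneg _)).2 fun i => ?_
  have hcard : (0 : ℝ) < Fintype.card ι := by
    have : Nonempty ι := ⟨i⟩
    positivity
  rw [Pi.sub_apply, Real.norm_eq_abs, div_sub' hcard.ne', abs_div, abs_of_pos hcard,
    div_le_iff₀ hcard]
  calc |∑ j, μ j - Fintype.card ι * a| = ‖∑ j, (μ - fun _ => a : ι → ℝ) j‖ := by
        simp [Finset.sum_sub_distrib, Real.norm_eq_abs]
    _ ≤ ∑ j, ‖(μ - fun _ => a : ι → ℝ) j‖ := norm_sum_le _ _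
    _ ≤ ∑ _j : ι, ‖μ - fun _ => a‖ := Finset.sum_le_sum fun j _ => norm_le_pi_norm _ j
    _ = ‖μ - fun _ => a‖ * Fintype.card ι := by simp [mul_comm]

end Average

theorem LinearMap.apply_eq_zero_of_sum_eq_zero {ι R M : Type*} [Fintype ι] [DecidableEq ι]
    [CommSemiring R] [AddCommMonoid M] [Module R M] (f : (ι → R) →ₗ[R] M)
    (hf : ∀ i j, f (Pi.single i 1) = f (Pi.single j 1)) {x : ι → R} (hx : ∑ i, x i = 0) :
    f x = 0 := by
  rcases isEmpty_or_nonempty ι with _ | ⟨⟨i₀⟩⟩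
  · simp [Subsingleton.elim x 0]
  calc f x = ∑ i, x i • f (Pi.single i 1) := by
        conv_lhs => rw [← Finset.univ_sum_single x]
        simp_rw [map_sum, ← map_smul, ← Pi.single_smul', smul_eq_mul, mul_one]
    _ = 0 := by simp_rw [hf _ i₀, ← Finset.sum_smul, hx, zero_smul]

theorem fderiv_apply_single_eq_of_update_eq {ι G : Type*} [Fintype ι] [DecidableEq ι]
    [NormedAddCommGroup G] [NormedSpace ℝ G] {F : (ι → ℝ) → G} {x : ι → ℝ} {i j : ι}
    (hx : x i = x j) (hF : ∀ b, F (Function.update x i b) = F (Function.update x j b)) :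
    fderiv ℝ F x (Pi.single i 1) = fderiv ℝ F x (Pi.single j 1) := by
  by_cases hd : DifferentiableAt ℝ F x
  swap
  · simp [fderiv_zero_of_not_differentiableAt hd]
  have hpartial : ∀ l, HasDerivAt (fun b => F (Function.update x l b))
      (fderiv ℝ F x (Pi.single l 1)) (x l) := fun l =>
    hd.hasFDerivAt.comp_hasDerivAt_of_eq (x l) (hasDerivAt_update x l (x l))
      (Function.update_eq_self l x).symm
  have hj := hpartial j
  rw [← hx, ← funext hF] at hj
  exact (hpartial i).unique hj

section Taylor

variable {E G : Type*} [NormedAddCommGroup E] [NormedSpace ℝ E] [NormedAddCommGroup G]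
  [NormedSpace ℝ G] {F : E → G}

theorem Convex.norm_image_sub_sub_fderiv_le {s : Set E} {K : NNReal} (hs : Convex ℝ s)
    (hd : ∀ x ∈ s, DifferentiableAt ℝ F x) (hL : LipschitzOnWith K (fderiv ℝ F) s)
    {y z : E} (hy : y ∈ s) (hz : z ∈ s) :
    ‖F z - F y - fderiv ℝ F y (z - y)‖ ≤ K * ‖z - y‖ ^ 2 := by
  have hseg := hs.segment_subset hy hz
  have hbound : ∀ w ∈ segment ℝ y z, ‖fderiv ℝ F w - fderiv ℝ F y‖ ≤ K * ‖z - y‖ := by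
    intro w hw
    calc ‖fderiv ℝ F w - fderiv ℝ F y‖ ≤ K * ‖w - y‖ := hL.norm_sub_le (hseg hw) hy
      _ ≤ K * ‖z - y‖ := by gcongr; exact norm_sub_le_of_mem_segment hw
  calc ‖F z - F y - fderiv ℝ F y (z - y)‖ ≤ K * ‖z - y‖ * ‖z - y‖ :=
        (convex_segment y z).norm_image_sub_le_of_norm_fderiv_le' (fun w hw => hd w (hseg hw))
          hbound (left_mem_segment ℝ y z) (right_mem_segment ℝ y z)
    _ = K * ‖z - y‖ ^ 2 := by ring

theorem ContDiffAt.exists_norm_image_sub_sub_fderiv_le {x : E} (hF : ContDiffAt ℝ 2 F x) :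
    ∃ K : NNReal, ∃ ε > 0, ∀ y ∈ ball x ε, ∀ z ∈ ball x ε,
      ‖F z - F y - fderiv ℝ F y (z - y)‖ ≤ K * ‖z - y‖ ^ 2 := by
  obtain ⟨K, t, ht, hL⟩ := (hF.fderiv_right (by norm_num)).exists_lipschitzOnWith
  have hd : ∀ᶠ y in nhds x, DifferentiableAt ℝ F y :=
    (hF.eventually (by norm_num)).mono fun y hy => hy.differentiableAt (by norm_num)
  obtain ⟨ε, hε, hball⟩ := Metric.mem_nhds_iff.1 (Filter.inter_mem ht hd)
  exact ⟨K, ε, hε, fun y hy z hz => (convex_ball x ε).norm_image_sub_sub_fderiv_le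
    (fun w hw => (hball hw).2) (hL.mono fun w hw => (hball hw).1) hy hz⟩

end Taylor

theorem averaging_principle_weak_general (k : ℕ) (F : (Fin k → ℝ) → ℝ)
    (hweak : ∀ (c b : ℝ) (i j : Fin k),
      F (Function.update (fun _ => c) i b) = F (Function.update (fun _ => c) j b))
    (a : ℝ) (hF : ContDiffAt ℝ 2 F (fun _ => a)) :
    ∃ C > (0:ℝ), ∃ δ > (0:ℝ), ∀ μ : Fin k → ℝ,
      ‖μ - (fun _ => a)‖ < δ →
      |F μ - F (fun _ => (∑ j, μ j) / k)| ≤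
        C * ‖μ - (fun _ => (∑ j, μ j) / k)‖ ^ 2 := by
  obtain ⟨K, ε, hε, htaylor⟩ := hF.exists_norm_image_sub_sub_fderiv_le
  refine ⟨K + 1, by positivity, ε, hε, fun μ hμ => ?_⟩
  set v : Fin k → ℝ := fun _ => (∑ j, μ j) / k
  have hμ_mem : μ ∈ ball (fun _ => a) ε := by rwa [mem_ball, dist_eq_norm]
  have hv_mem : v ∈ ball (fun _ => a) ε := by
    have := norm_const_average_sub_const_le μ a
    rw [Fintype.card_fin] at this
    rw [mem_ball, dist_eq_norm]
    exact this.trans_lt hμ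
  have hlinear : fderiv ℝ F v (μ - v) = 0 := by
    refine (fderiv ℝ F v).toLinearMap.apply_eq_zero_of_sum_eq_zero
      (fun i j => fderiv_apply_single_eq_of_update_eq rfl (hweak _ · i j)) ?_
    simpa only [Pi.sub_apply, Fintype.card_fin] using sum_sub_average_eq_zero μ
  have hbound := htaylor v hv_mem μ hμ_mem
  rw [hlinear, sub_zero, Real.norm_eq_abs] at hbound
  exact hbound.trans (by gcongr; exact le_add_of_nonneg_right zero_le_one)

/-- **The Averaging Principle under weak interchangeability** (Corollary of the paper).
If `F : ℝ^k → ℝ` is weakly interchangeable (the value of `F` on a vector that is constant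
except in one coordinate does not depend on which coordinate is exceptional) and twice
continuously differentiable near the diagonal point `(a,…,a)`, then
`F μ = F (μ̄,…,μ̄) + O(‖μ - μ̄𝟙‖²)` for `μ` near the diagonal. -/
theorem averaging_principle_weak (k : ℕ) (hk : 1 ≤ k) (F : (Fin k → ℝ) → ℝ)
    (hweak : ∀ (c b : ℝ) (i j : Fin k),
      F (Function.update (fun _ => c) i b) = F (Function.update (fun _ => c) j b))
    (a : ℝ) (hF : ContDiffAt ℝ 2 F (fun _ => a)) :
    ∃ C > (0:ℝ), ∃ δ > (0:ℝ), ∀ μ : Fin k → ℝ,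
      ‖μ - (fun _ => a)‖ < δ →
      |F μ - F (fun _ => (∑ j, μ j) / k)| ≤
        C * ‖μ - (fun _ => (∑ j, μ j) / k)‖ ^ 2 :=
  averaging_principle_weak_general k F hweak a hF
end

section
/- Let k ≥ 2, let F : ℝ^k → ℝ be interchangeable (i.e., invariant under all permutations of its arguments) and twice continuously differentiable on a neighborhood of the diagonal point a·𝟙 = (a,…,a), and set α := (1/2)(∂²F/∂μ_1∂μ_1(a·𝟙) − ∂²F/∂μ_1∂μ_2(a·𝟙)). Then, as μ → a·𝟙 along vectors μ ∈ ℝ^k whose arithmetic mean equals a (i.e., (1/k)∑_{i=1}^k μ_i = a), one has F(μ) = F(a·𝟙) + α ∑_{i=1}^k (μ_i − a)² + o(‖μ − a·𝟙‖²). -/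
/-!
By the symmetry of `F`, the gradient of `F` at the diagonal point `a𝟙` has equal entries and its
Hessian `H` has a common diagonal entry `H₁₁` and a common off-diagonal entry `H₁₂`; hence for
`h = μ - a𝟙` the first- and second-order terms of the Taylor expansion are `c ∑ hᵢ` and
`½ (H₁₂ (∑ hᵢ)² + (H₁₁ - H₁₂) ∑ hᵢ²)`. On the hyperplane of mean `a` we have `∑ hᵢ = 0`, so the
expansion collapses to `F(a𝟙) + α ∑ hᵢ²` up to the Peano remainder `o(‖h‖²)`.
-/

open Asymptotics Filter Topology

section Taylor

variable {E G : Type*} [NormedAddCommGroup E] [NormedSpace ℝ E] [NormedAddCommGroup G]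
  [NormedSpace ℝ G] {f : E → G} {x₀ : E}

theorem ContDiffAt.isLittleO_sub_taylor_two (hf : ContDiffAt ℝ 2 f x₀) :
    (fun x => f x - f x₀ - fderiv ℝ f x₀ (x - x₀) -
        (2 : ℝ)⁻¹ • fderiv ℝ (fderiv ℝ f) x₀ (x - x₀) (x - x₀))
      =o[𝓝 x₀] fun x => ‖x - x₀‖ ^ 2 := by
  set B := fderiv ℝ (fderiv ℝ f) x₀
  obtain ⟨r, hr, hdiff⟩ : ∃ r > 0, ∀ y ∈ Metric.ball x₀ r, DifferentiableAt ℝ f y :=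
    Metric.eventually_nhds_iff_ball.1 <|
      (hf.eventually (by simp)).mono fun y hy => hy.differentiableAt (by norm_num)
  have hB : HasFDerivAt (fderiv ℝ f) B x₀ :=
    ((hf.fderiv_right (m := 1) (by norm_num)).differentiableAt one_ne_zero).hasFDerivAt
  have hsymm : ∀ v w, B v w = B w v := hf.isSymmSndFDerivAt (by simp)
  have hball : 𝓝[Metric.ball x₀ r] x₀ = 𝓝 x₀ := nhdsWithin_eq_nhds.2 (Metric.ball_mem_nhds x₀ hr)
  -- `B` is symmetric, so `x ↦ ½ B (x - x₀) (x - x₀)` has derivative `B (y - x₀)` at `y`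
  have hφ : ∀ y ∈ Metric.ball x₀ r, HasFDerivWithinAt
      (fun x => f x - fderiv ℝ f x₀ (x - x₀) - (2 : ℝ)⁻¹ • B (x - x₀) (x - x₀))
      (fderiv ℝ f y - fderiv ℝ f x₀ - B (y - x₀)) (Metric.ball x₀ r) y := by
    intro y hy
    have hsub : HasFDerivAt (fun x : E => x - x₀) (ContinuousLinearMap.id ℝ E) y :=
      (hasFDerivAt_id y).sub_const x₀
    have hquad := ((B.hasFDerivAt.comp y hsub).clm_apply hsub).const_smul (2 : ℝ)⁻¹
    refine ((((hdiff y hy).hasFDerivAt.sub ((fderiv ℝ f x₀).hasFDerivAt.comp y hsub)).sub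
      hquad).congr_fderiv ?_).hasFDerivWithinAt
    ext v
    simp only [ContinuousLinearMap.comp_id, Function.comp_apply, map_sub, smul_add, sub_apply,
      add_apply, smul_apply, ContinuousLinearMap.flip_apply, hsymm v, sub_right_inj]
    module
  have hφ' : (fun y => fderiv ℝ f y - fderiv ℝ f x₀ - B (y - x₀))
      =o[𝓝[Metric.ball x₀ r] x₀] fun y => ‖y - x₀‖ ^ 1 := by
    simpa [hball] using hB.isLittleO.norm_right
  have h := (convex_ball x₀ r).isLittleO_pow_succ (Metric.mem_ball_self hr) hφ hφ'
  rw [hball] at h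
  refine h.congr_left fun x => ?_
  simp only [sub_self, map_zero, smul_zero, sub_zero]
  abel

end Taylor

namespace ContinuousLinearEquiv

variable {𝕜 E G : Type*} [NontriviallyNormedField 𝕜] [NormedAddCommGroup E] [NormedSpace 𝕜 E]
  [NormedAddCommGroup G] [NormedSpace 𝕜 G] (L : E ≃L[𝕜] E) {f : E → G}

theorem fderiv_eq_comp_of_comp_eq (hf : f ∘ L = f) (x : E) :
    fderiv 𝕜 f x = (fderiv 𝕜 f (L x)).comp (L : E →L[𝕜] E) := by
  conv_lhs => rw [← hf]
  exact L.comp_right_fderiv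

theorem fderiv_apply_of_comp_eq (hf : f ∘ L = f) (x u : E) :
    fderiv 𝕜 f (L x) (L u) = fderiv 𝕜 f x u := by
  rw [L.fderiv_eq_comp_of_comp_eq hf x]
  rfl

theorem fderiv_fderiv_apply_of_comp_eq (hf : f ∘ L = f) (x u v : E) :
    fderiv 𝕜 (fderiv 𝕜 f) (L x) (L u) (L v) = fderiv 𝕜 (fderiv 𝕜 f) x u v := by
  have hf' : fderiv 𝕜 f = L.symm.arrowCongr (.refl 𝕜 G) ∘ fderiv 𝕜 f ∘ L :=
    funext (L.fderiv_eq_comp_of_comp_eq hf)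
  conv_rhs => rw [hf', comp_fderiv, comp_right_fderiv]
  simp

end ContinuousLinearEquiv

theorem Equiv.Perm.exists_apply_eq_and_apply_eq {α : Type*} [DecidableEq α] {i j l m : α}
    (hij : i ≠ j) (hlm : l ≠ m) : ∃ τ : Perm α, τ i = l ∧ τ j = m := by
  have hj : swap i l j ≠ l := fun h =>
    hij ((swap i l).injective (h.trans (swap_apply_left i l).symm)).symm
  refine ⟨swap (swap i l j) m * swap i l, ?_, by simp⟩
  simp [swap_apply_of_ne_of_ne hj.symm hlm]

section PermInvariant

variable {ι : Type*} [Fintype ι]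

section Derivative

variable {𝕜 G : Type*} [NontriviallyNormedField 𝕜] [CompleteSpace 𝕜] [NormedAddCommGroup G]
  [NormedSpace 𝕜 G] {F : (ι → 𝕜) → G}

theorem fderiv_apply_comp_perm (hF : ∀ (σ : Equiv.Perm ι) (μ : ι → 𝕜), F (μ ∘ σ) = F μ)
    (σ : Equiv.Perm ι) (x u : ι → 𝕜) : fderiv 𝕜 F (x ∘ σ) (u ∘ σ) = fderiv 𝕜 F x u :=
  (LinearEquiv.funCongrLeft 𝕜 𝕜 σ).toContinuousLinearEquiv.fderiv_apply_of_comp_eq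
    (funext (hF σ)) x u

theorem fderiv_fderiv_apply_comp_perm (hF : ∀ (σ : Equiv.Perm ι) (μ : ι → 𝕜), F (μ ∘ σ) = F μ)
    (σ : Equiv.Perm ι) (x u v : ι → 𝕜) :
    fderiv 𝕜 (fderiv 𝕜 F) (x ∘ σ) (u ∘ σ) (v ∘ σ) = fderiv 𝕜 (fderiv 𝕜 F) x u v :=
  (LinearEquiv.funCongrLeft 𝕜 𝕜 σ).toContinuousLinearEquiv.fderiv_fderiv_apply_of_comp_eq
    (funext (hF σ)) x u v

end Derivative

variable [DecidableEq ι] {𝕜 : Type*} [NormedField 𝕜]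

theorem ContinuousLinearMap.apply_eq_sum_single {M : Type*} [AddCommGroup M] [Module 𝕜 M]
    [TopologicalSpace M] (T : (ι → 𝕜) →L[𝕜] M) (u : ι → 𝕜) :
    T u = ∑ i, u i • T (Pi.single i 1) := by
  conv_lhs => rw [← Finset.univ_sum_single u, map_sum]
  refine Finset.sum_congr rfl fun i _ => ?_
  rw [← map_smul, ← Pi.single_smul', smul_eq_mul, mul_one]

theorem ContinuousLinearMap.apply_eq_mul_sum_of_perm_invariant (T : (ι → 𝕜) →L[𝕜] 𝕜)
    (hT : ∀ (σ : Equiv.Perm ι) (u : ι → 𝕜), T (u ∘ σ) = T u) (i : ι) (u : ι → 𝕜) :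
    T u = T (Pi.single i 1) * ∑ j, u j := by
  rw [T.apply_eq_sum_single, Finset.mul_sum]
  refine Finset.sum_congr rfl fun j _ => ?_
  rw [← hT (Equiv.swap i j) (Pi.single i 1), Pi.single_comp_equiv, Equiv.symm_swap,
    Equiv.swap_apply_left, smul_eq_mul, mul_comm]

theorem ContinuousLinearMap.apply_apply_self_of_perm_invariant
    (B : (ι → 𝕜) →L[𝕜] (ι → 𝕜) →L[𝕜] 𝕜)
    (hB : ∀ (σ : Equiv.Perm ι) (u v : ι → 𝕜), B (u ∘ σ) (v ∘ σ) = B u v)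
    {i j : ι} (hij : i ≠ j) (u : ι → 𝕜) :
    B u u = B (Pi.single i 1) (Pi.single j 1) * (∑ l, u l) ^ 2 +
      (B (Pi.single i 1) (Pi.single i 1) - B (Pi.single i 1) (Pi.single j 1)) * ∑ l, u l ^ 2 := by
  set A := B (Pi.single i 1) (Pi.single i 1)
  set C := B (Pi.single i 1) (Pi.single j 1)
  have hentry : ∀ l m, B (Pi.single l 1) (Pi.single m 1) = C + if l = m then A - C else 0 := by
    intro l m
    rcases eq_or_ne l m with rfl | hlm
    · have := hB (Equiv.swap i l) (Pi.single i 1) (Pi.single i 1)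
      rw [Pi.single_comp_equiv, Equiv.symm_swap, Equiv.swap_apply_left] at this
      rw [this, if_pos rfl]
      ring
    · obtain ⟨τ, hτi, hτj⟩ := Equiv.Perm.exists_apply_eq_and_apply_eq hij hlm
      have := hB τ.symm (Pi.single i 1) (Pi.single j 1)
      rw [Pi.single_comp_equiv, Pi.single_comp_equiv, Equiv.symm_symm, hτi, hτj] at this
      rw [this, if_neg hlm, add_zero]
  calc B u u = ∑ l, ∑ m, u l * u m * B (Pi.single l 1) (Pi.single m 1) := by
        rw [B.apply_eq_sum_single, sum_apply]
        refine Finset.sum_congr rfl fun l _ => ?_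
        rw [smul_apply, (B _).apply_eq_sum_single, Finset.smul_sum]
        simp only [smul_eq_mul, mul_assoc]
    _ = _ := by
        simp only [hentry, mul_add, mul_ite, mul_zero, Finset.sum_add_distrib,
          Finset.sum_ite_eq, Finset.mem_univ, if_true, sq, Finset.sum_mul_sum]
        simp only [← Finset.sum_mul]
        ring

end PermInvariant

/-- The paper's formula for the leading-order `O(ε²)` error term of the Averaging Principle:
as `μ → a𝟙` along vectors whose arithmetic mean equals `a`,
`F(μ) = F(a𝟙) + α ∑ᵢ (μᵢ - a)² + o(‖μ - a𝟙‖²)`, where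
`α = (1/2)(∂²F/∂μ₁²(a𝟙) - ∂²F/∂μ₁∂μ₂(a𝟙))`. -/
theorem averaging_error_term (k : ℕ) (hk : 2 ≤ k) (F : (Fin k → ℝ) → ℝ)
    (hsym : ∀ (σ : Equiv.Perm (Fin k)) (μ : Fin k → ℝ), F (μ ∘ σ) = F μ)
    (a : ℝ) (hF : ContDiffAt ℝ 2 F (fun _ => a)) (α : ℝ)
    (hα : α = (1 / 2) *
      (fderiv ℝ (fderiv ℝ F) (fun _ => a) (Pi.single (⟨0, by omega⟩ : Fin k) 1)
          (Pi.single (⟨0, by omega⟩ : Fin k) 1) -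
        fderiv ℝ (fderiv ℝ F) (fun _ => a) (Pi.single (⟨0, by omega⟩ : Fin k) 1)
          (Pi.single (⟨1, by omega⟩ : Fin k) 1))) :
    (fun μ : Fin k → ℝ => F μ - F (fun _ => a) - α * ∑ i, (μ i - a) ^ 2)
      =o[nhdsWithin (fun _ => a) {μ : Fin k → ℝ | (∑ i, μ i) / k = a}]
        fun μ : Fin k → ℝ => ‖μ - (fun _ => a)‖ ^ 2 := by
  set x₀ : Fin k → ℝ := fun _ => a
  have hlin := (fderiv ℝ F x₀).apply_eq_mul_sum_of_perm_invariant
    (fun σ u => fderiv_apply_comp_perm hsym σ x₀ u) ⟨0, by omega⟩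
  have hquad := (fderiv ℝ (fderiv ℝ F) x₀).apply_apply_self_of_perm_invariant
    (fun σ u v => fderiv_fderiv_apply_comp_perm hsym σ x₀ u v)
    (i := ⟨0, by omega⟩) (j := ⟨1, by omega⟩) (by simp [Fin.ext_iff])
  refine (hF.isLittleO_sub_taylor_two.mono nhdsWithin_le_nhds).congr' ?_ .rfl
  filter_upwards [self_mem_nhdsWithin] with μ hμ
  have hsum : ∑ i, (μ - x₀) i = 0 := by
    have hk0 : (k : ℝ) ≠ 0 := by positivity
    rw [div_eq_iff hk0] at hμ
    simp [x₀, Finset.sum_sub_distrib, hμ, mul_comm]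
  rw [hlin, hquad, hsum, hα]
  simp only [x₀, Pi.sub_apply, smul_eq_mul]
  ring
end

section
/- Let λ, μ_1, μ_2 > 0 with ρ := λ/(μ_1+μ_2) < 1. Let p : ℕ → ℝ be a summable sequence of nonnegative reals with ∑_{n=0}^∞ p_n = 1, and let q_{10}, q_{01} ≥ 0 satisfy p_1 = q_{10} + q_{01} together with the steady-state balance equations: λ p_0 = μ_1 q_{10} + μ_2 q_{01}; (λ/2) p_0 + μ_2 p_2 = (λ + μ_1) q_{10}; (λ/2) p_0 + μ_1 p_2 = (λ + μ_2) q_{01}; λ q_{10} + λ q_{01} + (μ_1+μ_2) p_3 = (λ + μ_1 + μ_2) p_2; and λ p_n + (μ_1+μ_2) p_{n+2} = (λ + μ_1 + μ_2) p_{n+1} for every n ≥ 2. Then the sequence (n p_n) is summable and ∑_{n=0}^∞ n p_n = (1/(1−ρ)²) · 1 / ( (1/ρ) · (2μ_1μ_2/(μ_1+μ_2)²) + 1/(1−ρ) ). -/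
/-!
Adding the balance equations of the states `0` and `1` gives the flow balance across the cut
between one and two customers, `(μ₁ + μ₂) p₂ = λ p₁`; the balance equations of the states `n ≥ 2`
propagate it to every cut, so `p (n + 1) = ρ ^ n p₁`. The one-customer balance equations then
express `p₀` through `p₁`, the normalisation `∑ pₙ = 1` fixes `p₁`, and the mean is
`∑ n pₙ = p₁ ∑ (n + 1) ρ ^ n = p₁ / (1 - ρ) ^ 2`.
-/

theorem eq_pow_mul_of_mul_succ_eq {K : Type*} [Field K] {a : ℕ → K} {b c : K} (hc : c ≠ 0)
    (h : ∀ n, c * a (n + 1) = b * a n) (n : ℕ) : a n = (b / c) ^ n * a 0 := by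
  induction n with
  | zero => simp
  | succ n ih =>
    rw [pow_succ', mul_assoc, ← ih, div_mul_eq_mul_div, eq_div_iff hc, mul_comm, h]

section GeometricTail

variable {𝕜 : Type*} [NormedField 𝕜] {p : ℕ → 𝕜} {r : 𝕜}

theorem hasSum_of_succ_eq_pow_mul (hr : ‖r‖ < 1) (h : ∀ n, p (n + 1) = r ^ n * p 1) :
    HasSum p (p 0 + p 1 / (1 - r)) := by
  refine HasSum.zero_add ?_
  rw [funext h, div_eq_inv_mul]
  exact (hasSum_geometric_of_norm_lt_one hr).mul_right (p 1)

theorem hasSum_coe_mul_of_succ_eq_pow_mul (hr : ‖r‖ < 1) (h : ∀ n, p (n + 1) = r ^ n * p 1) :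
    HasSum (fun n : ℕ => (n : 𝕜) * p n) (p 1 / (1 - r) ^ 2) := by
  have hr1 : 1 - r ≠ 0 := sub_ne_zero.2 (ne_of_apply_ne norm (by simpa using hr.ne)).symm
  have hshift : (fun n : ℕ => ((n + 1 : ℕ) : 𝕜) * p (n + 1)) =
      fun n : ℕ => ((n : 𝕜) * r ^ n + r ^ n) * p 1 := by
    ext n; rw [h]; push_cast; ring
  have hsum := ((hasSum_coe_mul_geometric_of_norm_lt_one hr).add
      (hasSum_geometric_of_norm_lt_one hr)).mul_right (p 1)
  rw [← hshift] at hsum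
  rw [show p 1 / (1 - r) ^ 2 = ((0 : ℕ) : 𝕜) * p 0 + (r / (1 - r) ^ 2 + (1 - r)⁻¹) * p 1 by
    field_simp; ring]
  exact hsum.zero_add

end GeometricTail

namespace MM2

variable {lam μ₁ μ₂ q₁₀ q₀₁ : ℝ} {p : ℕ → ℝ}

theorem cut_balance_zero (hp1 : p 1 = q₁₀ + q₀₁) (e1 : lam * p 0 = μ₁ * q₁₀ + μ₂ * q₀₁)
    (e2 : lam / 2 * p 0 + μ₂ * p 2 = (lam + μ₁) * q₁₀)
    (e3 : lam / 2 * p 0 + μ₁ * p 2 = (lam + μ₂) * q₀₁) :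
    (μ₁ + μ₂) * p 2 = lam * p 1 := by
  linear_combination e2 + e3 - e1 - lam * hp1

theorem cut_balance (hp1 : p 1 = q₁₀ + q₀₁) (hcut : (μ₁ + μ₂) * p 2 = lam * p 1)
    (e4 : lam * q₁₀ + lam * q₀₁ + (μ₁ + μ₂) * p 3 = (lam + μ₁ + μ₂) * p 2)
    (e5 : ∀ n, 2 ≤ n → lam * p n + (μ₁ + μ₂) * p (n + 2) = (lam + μ₁ + μ₂) * p (n + 1)) :
    ∀ n, (μ₁ + μ₂) * p (n + 2) = lam * p (n + 1)
  | 0 => hcut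
  | 1 => by linear_combination e4 + lam * hp1 + hcut
  | n + 2 => by linear_combination e5 (n + 2) (by omega) + cut_balance hp1 hcut e4 e5 (n + 1)

theorem idle_balance (hlam : 0 < lam) (hμ₁ : 0 < μ₁) (hμ₂ : 0 < μ₂) (hp1 : p 1 = q₁₀ + q₀₁)
    (e2 : lam / 2 * p 0 + μ₂ * p 2 = (lam + μ₁) * q₁₀)
    (e3 : lam / 2 * p 0 + μ₁ * p 2 = (lam + μ₂) * q₀₁)
    (hcut : (μ₁ + μ₂) * p 2 = lam * p 1) :
    lam * (μ₁ + μ₂) * p 0 = 2 * μ₁ * μ₂ * p 1 := by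
  refine mul_left_cancel₀ (by positivity : 2 * lam + μ₁ + μ₂ ≠ 0) ?_
  linear_combination (-2 * (μ₁ + μ₂) * (lam + μ₁) * (lam + μ₂)) * hp1 +
    (2 * (μ₁ + μ₂) * (lam + μ₂)) * e2 + (2 * (μ₁ + μ₂) * (lam + μ₁)) * e3 -
    (2 * (lam * (μ₁ + μ₂) + μ₁ ^ 2 + μ₂ ^ 2)) * hcut

end MM2

theorem MM2_expected_customers_general (lam μ₁ μ₂ : ℝ) (hlam : 0 < lam) (hμ₁ : 0 < μ₁)
    (hμ₂ : 0 < μ₂) (hρ : lam / (μ₁ + μ₂) < 1)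
    (p : ℕ → ℝ) (htotal : ∑' n, p n = 1)
    (q₁₀ q₀₁ : ℝ) (hp1 : p 1 = q₁₀ + q₀₁)
    (e1 : lam * p 0 = μ₁ * q₁₀ + μ₂ * q₀₁)
    (e2 : lam / 2 * p 0 + μ₂ * p 2 = (lam + μ₁) * q₁₀)
    (e3 : lam / 2 * p 0 + μ₁ * p 2 = (lam + μ₂) * q₀₁)
    (e4 : lam * q₁₀ + lam * q₀₁ + (μ₁ + μ₂) * p 3 = (lam + μ₁ + μ₂) * p 2)
    (e5 : ∀ n, 2 ≤ n → lam * p n + (μ₁ + μ₂) * p (n + 2) = (lam + μ₁ + μ₂) * p (n + 1)) :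
    Summable (fun n : ℕ => (n : ℝ) * p n) ∧
      ∑' n : ℕ, (n : ℝ) * p n =
        (1 / (1 - lam / (μ₁ + μ₂)) ^ 2) *
          (1 / ((1 / (lam / (μ₁ + μ₂))) * (2 * μ₁ * μ₂ / (μ₁ + μ₂) ^ 2) +
            1 / (1 - lam / (μ₁ + μ₂)))) := by
  have hμ : 0 < μ₁ + μ₂ := add_pos hμ₁ hμ₂
  set ρ := lam / (μ₁ + μ₂) with hρ_def
  have hρ_norm : ‖ρ‖ < 1 := by rwa [Real.norm_of_nonneg (by positivity)]
  have hcut := MM2.cut_balance_zero hp1 e1 e2 e3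
  have hgeom : ∀ n, p (n + 1) = ρ ^ n * p 1 :=
    eq_pow_mul_of_mul_succ_eq (a := fun n => p (n + 1)) hμ.ne' (MM2.cut_balance hp1 hcut e4 e5)
  have hnorm : p 0 + p 1 / (1 - ρ) = 1 :=
    htotal ▸ (hasSum_of_succ_eq_pow_mul hρ_norm hgeom).tsum_eq.symm
  have hp0_eq : 1 / ρ * (2 * μ₁ * μ₂ / (μ₁ + μ₂) ^ 2) * p 1 = p 0 := by
    rw [hρ_def]
    field_simp
    linear_combination -MM2.idle_balance hlam hμ₁ hμ₂ hp1 e2 e3 hcut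
  have hp1_eq : p 1 = 1 / (1 / ρ * (2 * μ₁ * μ₂ / (μ₁ + μ₂) ^ 2) + 1 / (1 - ρ)) :=
    eq_one_div_of_mul_eq_one_left (by linear_combination hnorm + hp0_eq)
  have hmean := hasSum_coe_mul_of_succ_eq_pow_mul hρ_norm hgeom
  refine ⟨hmean.summable, ?_⟩
  rw [hmean.tsum_eq, ← hp1_eq]
  ring

/-- **Lemma 3 of the paper**: the expected number of customers in an M/M/2 queue with
heterogeneous servers. If the steady-state probabilities `p n` (with the one-customer
state split as `p 1 = q₁₀ + q₀₁`) satisfy the balance equations, then the expected number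
of customers is `(1/(1-ρ)²)·(1/((1/ρ)·(2μ₁μ₂/(μ₁+μ₂)²) + 1/(1-ρ)))`, `ρ = λ/(μ₁+μ₂)`. -/
theorem MM2_expected_customers (lam μ₁ μ₂ : ℝ) (hlam : 0 < lam) (hμ₁ : 0 < μ₁)
    (hμ₂ : 0 < μ₂) (hρ : lam / (μ₁ + μ₂) < 1)
    (p : ℕ → ℝ) (hpos : ∀ n, 0 ≤ p n) (hsummable : Summable p) (htotal : ∑' n, p n = 1)
    (q₁₀ q₀₁ : ℝ) (hq₁₀ : 0 ≤ q₁₀) (hq₀₁ : 0 ≤ q₀₁) (hp1 : p 1 = q₁₀ + q₀₁)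
    (e1 : lam * p 0 = μ₁ * q₁₀ + μ₂ * q₀₁)
    (e2 : lam / 2 * p 0 + μ₂ * p 2 = (lam + μ₁) * q₁₀)
    (e3 : lam / 2 * p 0 + μ₁ * p 2 = (lam + μ₂) * q₀₁)
    (e4 : lam * q₁₀ + lam * q₀₁ + (μ₁ + μ₂) * p 3 = (lam + μ₁ + μ₂) * p 2)
    (e5 : ∀ n, 2 ≤ n → lam * p n + (μ₁ + μ₂) * p (n + 2) = (lam + μ₁ + μ₂) * p (n + 1)) :
    Summable (fun n : ℕ => (n : ℝ) * p n) ∧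
      ∑' n : ℕ, (n : ℝ) * p n =
        (1 / (1 - lam / (μ₁ + μ₂)) ^ 2) *
          (1 / ((1 / (lam / (μ₁ + μ₂))) * (2 * μ₁ * μ₂ / (μ₁ + μ₂) ^ 2) +
            1 / (1 - lam / (μ₁ + μ₂)))) :=
  MM2_expected_customers_general lam μ₁ μ₂ hlam hμ₁ hμ₂ hρ p htotal q₁₀ q₀₁ hp1 e1 e2 e3 e4 e5
end

section
/- Let E be a real normed vector space, let k ≥ 1, and let R : E^k → ℝ be interchangeable (i.e., R(G_{σ(1)},…,G_{σ(k)}) = R(G_1,…,G_k) for every permutation σ of {1,…,k}) and twice continuously Fréchet differentiable on a neighborhood of the diagonal point (F̄,…,F̄) ∈ E^k for some F̄ ∈ E. Let H_1,…,H_k ∈ E satisfy ∑_{j=1}^k H_j = 0. Then, as ε → 0, R(F̄ + εH_1, …, F̄ + εH_k) = R(F̄, …, F̄) + O(ε²). -/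
/-!
Permuting the arguments is a continuous linear map fixing the diagonal point `(F̄,…,F̄)`, so the
interchangeability of `R` makes its derivative `Λ` there permutation invariant. An invariant
additive map only sees the sum of its arguments, `Λ H = Λ (Pi.single i (∑ j, H j)) = 0`, so the
first-order term of the Taylor expansion of `R` along `ε ↦ F̄ + ε H` vanishes; the remainder of a
`C²` map is `O(‖h‖²)` by the mean value inequality.
-/

open Asymptotics Filter Topology

theorem HasFDerivAt.comp_eq_of_comp_eq_self {𝕜 E F : Type*} [NontriviallyNormedField 𝕜]
    [NormedAddCommGroup E] [NormedSpace 𝕜 E] [NormedAddCommGroup F] [NormedSpace 𝕜 F]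
    {f : E → F} {f' : E →L[𝕜] F} {x : E} (hf : HasFDerivAt f f' x) (P : E →L[𝕜] E)
    (hfP : f ∘ P = f) (hPx : P x = x) : f'.comp P = f' := by
  have hcomp := (hPx.symm ▸ hf : HasFDerivAt f f' (P x)).comp x P.hasFDerivAt
  rw [hfP] at hcomp
  exact hcomp.unique hf

section PermInvariant

variable {ι M N 𝓕 : Type*} [Fintype ι] [DecidableEq ι] [AddCommMonoid M] [AddCommMonoid N]
  [FunLike 𝓕 (ι → M) N] [AddMonoidHomClass 𝓕 (ι → M) N]

theorem map_eq_map_single_sum {L : 𝓕} (hL : ∀ (σ : Equiv.Perm ι) (G : ι → M), L (G ∘ σ) = L G)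
    (i : ι) (G : ι → M) : L G = L (Pi.single i (∑ j, G j)) := by
  have hsingle : ∀ j x, L (Pi.single j x) = L (Pi.single i x) := fun j x => by
    rw [← hL (Equiv.swap i j), Pi.single_comp_equiv, Equiv.symm_swap, Equiv.swap_apply_right]
  calc L G = ∑ j, L (Pi.single j (G j)) := by rw [← map_sum, Finset.univ_sum_single]
    _ = ∑ j, L (Pi.single i (G j)) := by simp only [hsingle]
    _ = L (Pi.single i (∑ j, G j)) :=
      (map_sum ((L : (ι → M) →+ N).comp (AddMonoidHom.single _ i)) G _).symm

theorem map_eq_zero_of_sum_eq_zero {L : 𝓕}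
    (hL : ∀ (σ : Equiv.Perm ι) (G : ι → M), L (G ∘ σ) = L G) {G : ι → M} (hG : ∑ j, G j = 0) :
    L G = 0 := by
  cases isEmpty_or_nonempty ι with
  | inl _ => rw [Subsingleton.elim G 0, map_zero]
  | inr h => rw [map_eq_map_single_sum hL h.some, hG, Pi.single_zero, map_zero]

end PermInvariant

theorem ContDiffAt.isBigO_sub_sub_fderiv {E F : Type*} [NormedAddCommGroup E] [NormedSpace ℝ E]
    [NormedAddCommGroup F] [NormedSpace ℝ F] {f : E → F} {x : E} (hf : ContDiffAt ℝ 2 f x) :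
    (fun h => f (x + h) - f x - fderiv ℝ f x h) =O[𝓝 0] fun h => ‖h‖ ^ 2 := by
  have hf' : DifferentiableAt ℝ (fderiv ℝ f) x :=
    (hf.fderiv_right (m := 1) (by norm_num)).differentiableAt one_ne_zero
  obtain ⟨C, hC, hO⟩ := hf'.isBigO_sub.exists_nonneg
  obtain ⟨δ, hδ, hball⟩ := Metric.eventually_nhds_iff_ball.mp
    ((hf.eventually (by simp)).and hO.bound)
  refine IsBigO.of_bound C (Metric.eventually_nhds_iff_ball.mpr ⟨δ, hδ, fun h hh => ?_⟩)
  have hsub : Metric.closedBall x ‖h‖ ⊆ Metric.ball x δ :=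
    Metric.closedBall_subset_ball (by simpa using hh)
  have hmvt := (convex_closedBall x ‖h‖).norm_image_sub_le_of_norm_fderiv_le' (C := C * ‖h‖)
    (fun y hy => ((hball y (hsub hy)).1.differentiableAt (by simp)))
    (fun y hy => (hball y (hsub hy)).2.trans
      (mul_le_mul_of_nonneg_left (by simpa [dist_eq_norm] using hy) hC))
    (Metric.mem_closedBall_self (norm_nonneg h)) (y := x + h) (by simp)
  simpa [sq, mul_assoc] using hmvt

theorem averaging_principle_functionals_general (E : Type*) [NormedAddCommGroup E]
    [NormedSpace ℝ E] (k : ℕ) (R : (Fin k → E) → ℝ)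
    (hsym : ∀ (σ : Equiv.Perm (Fin k)) (G : Fin k → E), R (G ∘ σ) = R G)
    (Fbar : E) (hR : ContDiffAt ℝ 2 R (fun _ => Fbar))
    (H : Fin k → E) (hH : ∑ j, H j = 0) :
    (fun ε : ℝ => R (fun j => Fbar + ε • H j) - R (fun _ => Fbar))
      =O[nhds 0] fun ε : ℝ => ε ^ 2 := by
  have hderiv_perm (σ : Equiv.Perm (Fin k)) (G : Fin k → E) :
      fderiv ℝ R (fun _ => Fbar) (G ∘ σ) = fderiv ℝ R (fun _ => Fbar) G :=
    DFunLike.congr_fun ((hR.differentiableAt (by norm_num)).hasFDerivAt.comp_eq_of_comp_eq_self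
      (.pi fun j => .proj (σ j)) (funext (hsym σ)) rfl) G
  have hderiv_H : fderiv ℝ R (fun _ => Fbar) H = 0 := map_eq_zero_of_sum_eq_zero hderiv_perm hH
  have hline : Tendsto (fun ε : ℝ => ε • H) (𝓝 0) (𝓝 0) := by
    simpa using (tendsto_id (x := 𝓝 (0 : ℝ))).smul_const H
  have htaylor := hR.isBigO_sub_sub_fderiv.comp_tendsto hline
  simp only [Function.comp_def, map_smul, hderiv_H, smul_zero, sub_zero] at htaylor
  refine htaylor.trans (IsBigO.of_bound (‖H‖ ^ 2) (Eventually.of_forall fun ε => ?_))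
  simp [norm_smul, mul_pow, mul_comm]

/-- **The Averaging Principle for functionals** (appendix of the paper, equation
`R[F1,...,Fk]`): if `R : E^k → ℝ` is interchangeable and twice continuously Fréchet
differentiable near the diagonal point `(F̄,…,F̄)`, and `∑ Hⱼ = 0`, then
`R(F̄+εH₁,…,F̄+εH_k) = R(F̄,…,F̄) + O(ε²)` as `ε → 0`. -/
theorem averaging_principle_functionals (E : Type*) [NormedAddCommGroup E]
    [NormedSpace ℝ E] (k : ℕ) (hk : 1 ≤ k) (R : (Fin k → E) → ℝ)
    (hsym : ∀ (σ : Equiv.Perm (Fin k)) (G : Fin k → E), R (G ∘ σ) = R G)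
    (Fbar : E) (hR : ContDiffAt ℝ 2 R (fun _ => Fbar))
    (H : Fin k → E) (hH : ∑ j, H j = 0) :
    (fun ε : ℝ => R (fun j => Fbar + ε • H j) - R (fun _ => Fbar))
      =O[nhds 0] fun ε : ℝ => ε ^ 2 :=
  averaging_principle_functionals_general E k R hsym Fbar hR H hH
end
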